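/- The purely imaginary roots of the limit dispersion relation at m=6 are exactly 0 and ±√3·i: for υ ∈ ℝ, D₀(iυ;6) = 0 if and only if υ ∈ {0, √3, −√3}. -/

import Mathlib

open Complex

/-- Principal branch of the complex square root. -/
noncomputable def csqrt (z : ℂ) : ℂ := z ^ (1/2 : ℂ)

/-- The limit dispersion relation D₀(λ;m). -/
noncomputable def dispersion0 (m : ℝ) (l : ℂ) : ℂ :=
  -(1/2) * (2 * ((m : ℂ) + l) + 1 + csqrt (1 + 4 * l)) *
    (1 - csqrt (1 + 4 * l) / (1 + (m : ℂ))) + (m : ℂ)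

/-!
Writing `s = √(1 + 4λ)`, so that `s² = 1 + 4λ`, and clearing the denominator `1 + m`, the relation
`D₀(λ; m) = 0` becomes the linear equation `(m + 2λ) s = m + 2(m - 1)λ` in `s`. Squaring it and
substituting `s²` leaves `λ (4λ² + (6m - m²)λ + 2m) = 0`; at `m = 6` and `λ = iυ` this reads
`υ (3 - υ²) = 0`. Conversely `s = 1` at `λ = 0` and `s = 2 + iυ` at `υ² = 3` (both on the principal
branch, having positive real part) solve the linear equation.
-/

lemma sq_csqrt (z : ℂ) : csqrt z ^ 2 = z := by
  simp [csqrt, one_div]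

lemma csqrt_sq {w : ℂ} (hw : 0 < w.re) : csqrt (w ^ 2) = w := by
  simpa [csqrt, one_div] using sq_cpow_two_inv hw

lemma dispersion0_mul_eq (m : ℝ) (l : ℂ) (hm : (1 + m : ℂ) ≠ 0) :
    dispersion0 m l * (2 * (1 + m)) =
      (m + 2 * l) * csqrt (1 + 4 * l) - (m + 2 * (m - 1) * l) := by
  have hs := sq_csqrt (1 + 4 * l)
  rw [dispersion0]
  generalize csqrt (1 + 4 * l) = s at hs ⊢
  field_simp
  linear_combination hs

lemma dispersion0_eq_zero_iff {m : ℝ} (hm : m ≠ -1) (l : ℂ) :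
    dispersion0 m l = 0 ↔ (m + 2 * l) * csqrt (1 + 4 * l) = m + 2 * (m - 1) * l := by
  have hm' : (1 + m : ℂ) ≠ 0 := by
    exact_mod_cast fun h ↦ hm (by linarith)
  rw [← sub_eq_zero (a := (_ : ℂ) * _), ← dispersion0_mul_eq m l hm',
    mul_eq_zero, or_iff_left (mul_ne_zero two_ne_zero hm')]

lemma cubic_of_dispersion0_eq_zero {m : ℝ} (hm : m ≠ -1) {l : ℂ} (h : dispersion0 m l = 0) :
    l * (4 * l ^ 2 + (6 * m - m ^ 2) * l + 2 * m) = 0 := by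
  have hlin := (dispersion0_eq_zero_iff hm l).1 h
  have hs := sq_csqrt (1 + 4 * l)
  have hsq : ((m : ℂ) + 2 * l) ^ 2 * (1 + 4 * l) = (m + 2 * (m - 1) * l) ^ 2 := by
    rw [← hs, ← mul_pow, hlin]
  linear_combination hsq / 4

lemma dispersion0_zero {m : ℝ} (hm : m ≠ -1) : dispersion0 m 0 = 0 := by
  have hone : csqrt 1 = 1 := by simpa using csqrt_sq (w := 1) (by norm_num)
  rw [dispersion0_eq_zero_iff hm]
  simp [hone]

lemma dispersion0_six_I_mul_eq_zero_of_sq_eq_three {υ : ℝ} (hυ : υ ^ 2 = 3) :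
    dispersion0 6 (I * υ) = 0 := by
  have hυ' : (υ : ℂ) ^ 2 = 3 := by exact_mod_cast hυ
  have hs : csqrt (1 + 4 * (I * υ)) = 2 + υ * I := by
    have hsq : 1 + 4 * (I * υ) = (2 + υ * I) ^ 2 := by
      linear_combination (-(υ : ℂ) ^ 2) * I_sq + hυ'
    rw [hsq, csqrt_sq (by simp)]
  rw [dispersion0_eq_zero_iff (by norm_num), hs]
  push_cast
  linear_combination 2 * (υ : ℂ) ^ 2 * I_sq - 2 * hυ'

/-- the purely imaginary roots of D₀(·;6) are exactly 0 and
±√3·i. -/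
theorem purely_imaginary_roots_at_m6 (υ : ℝ) :
    dispersion0 6 (Complex.I * υ) = 0 ↔
      υ = 0 ∨ υ = Real.sqrt 3 ∨ υ = -Real.sqrt 3 := by
  have h6 : (6 : ℝ) ≠ -1 := by norm_num
  have hsqrt : Real.sqrt 3 ^ 2 = 3 := Real.sq_sqrt (by norm_num)
  constructor
  · intro h
    have hcubic := cubic_of_dispersion0_eq_zero h6 h
    have hυ : υ * (υ ^ 2 - 3) = 0 := by
      have : (υ : ℂ) * ((υ : ℂ) ^ 2 - 3) = 0 := by
        push_cast at hcubic
        linear_combination (I / 4) * hcubic + ((υ : ℂ) ^ 3 * (1 - I ^ 2) - 3 * υ) * I_sq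
      exact_mod_cast this
    rcases mul_eq_zero.1 hυ with h0 | h3
    · exact Or.inl h0
    · exact Or.inr (sq_eq_sq_iff_eq_or_eq_neg.1 (by linear_combination h3 - hsqrt))
  · rintro (rfl | rfl | rfl)
    · simpa using dispersion0_zero h6
    all_goals exact dispersion0_six_I_mul_eq_zero_of_sq_eq_three (by simp [hsqrt])
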